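/- The coalgebraic characterisation of the guarded-string language of a KAT expression: G(x) contains the single atom α iff ε_α(x) = true, and G(x) contains α p u iff G(δ_{α,p}(x)) contains u. -/

import Mathlib

/-- Boolean expressions over primitive tests `T`. -/
inductive BExp (T : Type) : Type
  | var : T → BExp T
  | and : BExp T → BExp T → BExp T
  | or : BExp T → BExp T → BExp T
  | not : BExp T → BExp T
  | top : BExp T
  | bot : BExp T

/-- An atom assigns a Boolean value to each primitive test. -/
def Atom (T : Type) := T → Bool

/-- Satisfaction of a Boolean expression by an atom. -/
def BExp.sat {T : Type} (α : Atom T) : BExp T → Bool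
  | .var t => α t
  | .and a b => a.sat α && b.sat α
  | .or a b => a.sat α || b.sat α
  | .not a => !a.sat α
  | .top => true
  | .bot => false

/-- KAT expressions over letters `A` and primitive tests `T`. -/
inductive KATExp (T A : Type) : Type
  | letter : A → KATExp T A
  | test : BExp T → KATExp T A
  | zero : KATExp T A
  | one : KATExp T A
  | plus : KATExp T A → KATExp T A → KATExp T A
  | mul : KATExp T A → KATExp T A → KATExp T A
  | star : KATExp T A → KATExp T A

/-- Guarded strings: an atom followed by a list of (letter, atom) pairs. -/
def GS (T A : Type) := Atom T × List (A × Atom T)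

def GS.lastAtom {T A : Type} (u : GS T A) : Atom T :=
  (u.2.map Prod.snd).getLastD u.1

/-- Partial concatenation of guarded strings. -/
def GS.cat {T A : Type} [DecidableEq (Atom T)] (u v : GS T A) :
    Option (GS T A) :=
  if u.lastAtom = v.1 then some (u.1, u.2 ++ v.2) else none

def gsCat {T A : Type} [DecidableEq (Atom T)] (x y : Set (GS T A)) :
    Set (GS T A) :=
  {w | ∃ u ∈ x, ∃ v ∈ y, u.cat v = some w}

def gsPow {T A : Type} [DecidableEq (Atom T)] (x : Set (GS T A)) :
    ℕ → Set (GS T A)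
  | 0 => {u | u.2 = []}
  | n + 1 => gsCat x (gsPow x n)

/-- The guarded-string language interpretation of KAT expressions. -/
def gsLang {T A : Type} [DecidableEq (Atom T)] : KATExp T A → Set (GS T A)
  | .letter p => {u | ∃ α β, u = (α, [(p, β)])}
  | .test a => {u | u.2 = [] ∧ a.sat u.1 = true}
  | .zero => ∅
  | .one => {u | u.2 = []}
  | .plus x y => gsLang x ∪ gsLang y
  | .mul x y => gsCat (gsLang x) (gsLang y)
  | .star x => ⋃ n : ℕ, gsPow (gsLang x) n

/-- `ε_α(x)`: does `x` accept the single atom `α`? -/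
def eps {T A : Type} (α : Atom T) : KATExp T A → Bool
  | .letter _ => false
  | .test a => a.sat α
  | .zero => false
  | .one => true
  | .plus x y => eps α x || eps α y
  | .mul x y => eps α x && eps α y
  | .star _ => true

/-- The Brzozowski derivative `δ_{α,p}` of a KAT expression. -/
def katDeriv {T A : Type} [DecidableEq A] (α : Atom T) (p : A) :
    KATExp T A → KATExp T A
  | .letter q => if p = q then .one else .zero
  | .test _ => .zero
  | .zero => .zero
  | .one => .zero
  | .plus x y => .plus (katDeriv α p x) (katDeriv α p y)
  | .mul x y =>
      if eps α x then .plus (.mul (katDeriv α p x) y) (katDeriv α p y)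
      else .mul (katDeriv α p x) y
  | .star x => .mul (katDeriv α p x) (.star x)

/-! Read the second half as the equation `gsDeriv α p (G(x)) = G(δ_{α,p}(x))`, where the semantic
derivative `gsDeriv α p` keeps the tails `u` of the strings `α p u` of a language. By induction
on `x` it suffices that `gsDeriv α p` obeys the same rules as `δ_{α,p}`: it commutes with unions; a
string `α p u` of `X · Y` splits either right after `α` (possible exactly when `α ∈ X`, i.e. `ε_α`
holds) or inside `u`; and in a power `X^(n+1)` leading factors that only contribute the atom `α` can
be dropped, so `α p u ∈ X*` iff `u ∈ δ(X) · X*`. -/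

namespace GS

variable {T A : Type}

@[simp]
lemma lastAtom_nil (α : Atom T) : lastAtom ((α, []) : GS T A) = α := rfl

@[simp]
lemma lastAtom_cons (α β : Atom T) (p : A) (l : List (A × Atom T)) :
    lastAtom ((α, (p, β) :: l) : GS T A) = lastAtom ((β, l) : GS T A) :=
  List.getLastD_cons ..

end GS

section Languages

variable {T A : Type}

def gsDeriv (α : Atom T) (p : A) (X : Set (GS T A)) : Set (GS T A) :=
  {u | ((α, (p, u.1) :: u.2) : GS T A) ∈ X}

lemma gsDeriv_union (α : Atom T) (p : A) (X Y : Set (GS T A)) :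
    gsDeriv α p (X ∪ Y) = gsDeriv α p X ∪ gsDeriv α p Y := rfl

variable [DecidableEq (Atom T)] {X Y : Set (GS T A)}

lemma mem_gsCat {β : Atom T} {l : List (A × Atom T)} :
    ((β, l) : GS T A) ∈ gsCat X Y ↔
      ∃ l₁ l₂, l = l₁ ++ l₂ ∧ ((β, l₁) : GS T A) ∈ X ∧
        ((GS.lastAtom (β, l₁), l₂) : GS T A) ∈ Y := by
  constructor
  · rintro ⟨⟨γ, l₁⟩, hu, ⟨δ, l₂⟩, hv, hcat⟩
    unfold GS.cat at hcat
    split_ifs at hcat with hlast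
    cases hcat
    exact ⟨l₁, l₂, rfl, hu, hlast ▸ hv⟩
  · rintro ⟨l₁, l₂, rfl, h₁, h₂⟩
    exact ⟨(β, l₁), h₁, (GS.lastAtom (β, l₁), l₂), h₂, by simp [GS.cat]⟩

lemma mem_gsCat_nil {α : Atom T} :
    ((α, []) : GS T A) ∈ gsCat X Y ↔ ((α, []) : GS T A) ∈ X ∧ ((α, []) : GS T A) ∈ Y := by
  simp [mem_gsCat]

lemma mem_gsCat_cons {α β : Atom T} {p : A} {l : List (A × Atom T)} :
    ((α, (p, β) :: l) : GS T A) ∈ gsCat X Y ↔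
      (((α, []) : GS T A) ∈ X ∧ ((α, (p, β) :: l) : GS T A) ∈ Y) ∨
        ∃ l₁ l₂, l = l₁ ++ l₂ ∧ ((α, (p, β) :: l₁) : GS T A) ∈ X ∧
          ((GS.lastAtom (β, l₁), l₂) : GS T A) ∈ Y := by
  rw [mem_gsCat]
  constructor
  · rintro ⟨_ | ⟨⟨q, γ⟩, l₁⟩, l₂, h, h₁, h₂⟩
    · obtain rfl : (p, β) :: l = l₂ := h
      exact Or.inl ⟨h₁, h₂⟩
    · obtain ⟨⟨rfl, rfl⟩, rfl⟩ : (p = q ∧ β = γ) ∧ l = l₁ ++ l₂ := by simpa using h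
      exact Or.inr ⟨l₁, l₂, rfl, h₁, by simpa using h₂⟩
  · rintro (⟨h₁, h₂⟩ | ⟨l₁, l₂, rfl, h₁, h₂⟩)
    · exact ⟨[], (p, β) :: l, rfl, h₁, h₂⟩
    · exact ⟨(p, β) :: l₁, l₂, rfl, h₁, by simpa using h₂⟩

lemma mem_gsDeriv_gsCat {α : Atom T} {p : A} {u : GS T A} :
    u ∈ gsDeriv α p (gsCat X Y) ↔
      u ∈ gsCat (gsDeriv α p X) Y ∨ (((α, []) : GS T A) ∈ X ∧ u ∈ gsDeriv α p Y) :=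
  mem_gsCat_cons.trans (or_comm.trans (or_congr_left
    (mem_gsCat (X := gsDeriv α p X) (β := u.1) (l := u.2)).symm))

lemma gsDeriv_iUnion_gsPow (α : Atom T) (p : A) :
    gsDeriv α p (⋃ n, gsPow X n) = gsCat (gsDeriv α p X) (⋃ n, gsPow X n) := by
  ext u
  constructor
  · intro h
    obtain ⟨n, hn⟩ := Set.mem_iUnion.mp h
    clear h
    induction n generalizing u with
    | zero => exact absurd hn (List.cons_ne_nil _ _)
    | succ n ih =>
      -- an empty first factor of `X^(n+1)` can be dropped, leaving `X^n`
      rcases mem_gsCat_cons.mp hn with ⟨-, hn⟩ | ⟨l₁, l₂, hl, h₁, h₂⟩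
      · exact ih u hn
      · exact mem_gsCat.mpr ⟨l₁, l₂, hl, h₁, Set.mem_iUnion.mpr ⟨n, h₂⟩⟩
  · intro h
    obtain ⟨l₁, l₂, hl, h₁, h₂⟩ := mem_gsCat.mp h
    obtain ⟨n, h₂⟩ := Set.mem_iUnion.mp h₂
    exact Set.mem_iUnion.mpr ⟨n + 1, mem_gsCat_cons.mpr (Or.inr ⟨l₁, l₂, hl, h₁, h₂⟩)⟩

end Languages

section KAT

variable {T A : Type} [DecidableEq (Atom T)]

theorem mem_gsLang_atom_iff_eps (x : KATExp T A) (α : Atom T) :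
    ((α, []) : GS T A) ∈ gsLang x ↔ eps α x = true := by
  induction x with
  | letter q =>
    refine iff_of_false ?_ Bool.false_ne_true
    rintro ⟨_, _, h⟩
    exact List.cons_ne_nil _ _ (congrArg Prod.snd h).symm
  | test a => exact ⟨And.right, And.intro rfl⟩
  | zero => exact iff_of_false (Set.notMem_empty _) Bool.false_ne_true
  | one => exact iff_of_true rfl rfl
  | plus x y ihx ihy => exact (or_congr ihx ihy).trans Bool.or_eq_true_iff.symm
  | mul x y ihx ihy => exact mem_gsCat_nil.trans ((and_congr ihx ihy).trans Bool.and_eq_true_iff.symm)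
  | star x => exact iff_of_true (Set.mem_iUnion.mpr ⟨0, rfl⟩) rfl

theorem gsDeriv_gsLang [DecidableEq A] (x : KATExp T A) (α : Atom T) (p : A) :
    gsDeriv α p (gsLang x) = gsLang (katDeriv α p x) := by
  induction x with
  | letter q =>
    ext u
    by_cases hpq : p = q
    · subst hpq
      rw [katDeriv, if_pos rfl]
      constructor
      · rintro ⟨_, _, h⟩
        exact (List.cons.inj (congrArg Prod.snd h)).2
      · intro (h : u.2 = [])
        exact ⟨α, u.1, by rw [← h]⟩
    · rw [katDeriv, if_neg hpq]
      refine iff_of_false ?_ (Set.notMem_empty u)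
      rintro ⟨_, _, h⟩
      exact hpq (congrArg Prod.fst (List.cons.inj (congrArg Prod.snd h)).1)
  | test a => exact Set.eq_empty_of_forall_notMem fun u h => List.cons_ne_nil _ _ h.1
  | zero => rfl
  | one => exact Set.eq_empty_of_forall_notMem fun u h => List.cons_ne_nil _ _ h
  | plus x y ihx ihy => rw [gsLang, gsDeriv_union, ihx, ihy]; rfl
  | mul x y ihx ihy =>
    ext u
    rw [gsLang, mem_gsDeriv_gsCat, ihx, ihy, mem_gsLang_atom_iff_eps]
    by_cases hx : eps α x <;>
      simp only [katDeriv, hx, ↓reduceIte, true_and, Bool.false_eq_true, false_and, or_false] <;> rfl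
  | star x ih => rw [gsLang, gsDeriv_iUnion_gsPow, ih]; rfl

end KAT

/-- Coalgebraic characterisation of the guarded-string language of a KAT
expression: `G(x)` contains the single atom `α` iff `ε_α(x)`, and contains
`α p u` iff `G(δ_{α,p}(x))` contains `u`. -/
theorem gsLang_coalgebraic {T A : Type} [DecidableEq (Atom T)] [DecidableEq A]
    (x : KATExp T A) :
    (∀ α : Atom T, (α, ([] : List (A × Atom T))) ∈ gsLang x ↔ eps α x = true)
    ∧ (∀ (α : Atom T) (p : A) (u : GS T A),
        ((α, (p, u.1) :: u.2) : GS T A) ∈ gsLang x ↔ u ∈ gsLang (katDeriv α p x)) :=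
  ⟨mem_gsLang_atom_iff_eps x, fun α p u => Set.ext_iff.mp (gsDeriv_gsLang x α p) u⟩
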